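/- Let g be a finite-dimensional semisimple Lie algebra over a field K of characteristic zero. Then for every x ∈ g and every odd natural number k, the trace of the k-th power of ad(x), i.e. Tr_g((ad x)^k), is zero. -/

import Mathlib

/-!
`ad x` is skew-adjoint for the Killing form, hence so is `(ad x) ^ k` for odd `k`. A nondegenerate
form `B` identifies `V` with its dual, and under this identification an endomorphism becomes the
transpose of its `B`-adjoint; as transposition preserves traces, `Tr f = Tr (-f) = -Tr f` for a
skew-adjoint `f`, which forces `Tr f = 0` once `2 ≠ 0`.
-/

namespace LinearMap

variable {K V : Type*} [Field K] [AddCommGroup V] [Module K V]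
  {B : LinearMap.BilinForm K V} {f g : Module.End K V}

theorem IsAdjointPair.pow (h : IsAdjointPair B B f g) (n : ℕ) :
    IsAdjointPair B B ⇑(f ^ n) ⇑(g ^ n) := by
  induction n with
  | zero => exact isAdjointPair_one
  | succ n ih =>
    rw [pow_succ' f n, pow_succ g n]
    exact h.mul ih

theorem IsAdjointPair.trace_eq [FiniteDimensional K V] (hB : B.Nondegenerate)
    (h : IsAdjointPair B B f g) : trace K V f = trace K V g := by
  let e := B.toDual hB
  have hconj : e.conj f = Module.Dual.transpose (R := K) g := by
    ext φ v
    obtain ⟨x, rfl⟩ := e.surjective φ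
    simp only [e, LinearEquiv.conj_apply, comp_apply, LinearEquiv.coe_coe,
      LinearEquiv.symm_apply_apply, BilinForm.toDual_def]
    exact h x v
  rw [← trace_conj' f e, hconj, trace_transpose']

theorem IsAdjointPair.trace_pow_eq_zero_of_odd [FiniteDimensional K V] [NeZero (2 : K)]
    (hB : B.Nondegenerate) (h : IsAdjointPair B B f ⇑(-f)) {k : ℕ} (hk : Odd k) :
    trace K V (f ^ k) = 0 := by
  have hneg : trace K V (f ^ k) = -trace K V (f ^ k) :=
    calc trace K V (f ^ k) = trace K V ((-f) ^ k) := (h.pow k).trace_eq hB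
      _ = -trace K V (f ^ k) := by rw [hk.neg_pow, map_neg]
  have htwo : (2 : K) * trace K V (f ^ k) = 0 := by linear_combination hneg
  exact (mul_eq_zero.mp htwo).resolve_left two_ne_zero

end LinearMap

theorem LieModule.isAdjointPair_traceForm_ad {R L M : Type*} [CommRing R] [LieRing L]
    [LieAlgebra R L] [AddCommGroup M] [Module R M] [LieRingModule L M] [LieModule R L M] (x : L) :
    (traceForm R L M).IsAdjointPair (traceForm R L M) ⇑(LieAlgebra.ad R L x)
      ⇑(-LieAlgebra.ad R L x) :=
  fun y z => by
    rw [LinearMap.neg_apply, map_neg]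
    exact traceForm_apply_lie_apply' R L M x y z

/-- For a finite-dimensional semisimple Lie algebra `L` over a field `K` of characteristic
zero, the trace of any odd power of `ad x` vanishes. -/
theorem trace_ad_pow_odd_eq_zero
    {K : Type*} [Field K] [CharZero K]
    {L : Type*} [LieRing L] [LieAlgebra K L] [Module.Finite K L]
    [LieAlgebra.IsKilling K L] (x : L) (k : ℕ) (hk : Odd k) :
    LinearMap.trace K L ((LieAlgebra.ad K L x) ^ k) = 0 :=
  (LieModule.isAdjointPair_traceForm_ad x).trace_pow_eq_zero_of_odd
    (LieAlgebra.IsKilling.killingForm_nondegenerate K L) hk
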